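/- For every integer k ≥ 2 and every m ≥ 1, the SEEK scoring function can distinguish a triple from its reverse: there exist segmented embeddings h, r, t (with k segments of dimension m each) such that f₄(h, r, t) ≠ f₄(t, r, h). Hence f₄ supports the modeling of antisymmetric relations. -/

import Mathlib

open Finset

/-- Multi-linear dot product of three vectors in ℝ^m. -/
def mdot {m : ℕ} (a b c : Fin m → ℝ) : ℝ := ∑ i : Fin m, a i * b i * c i

/-- Sign s_{x,y}: -1 if x is odd and x + y ≥ k, else 1. -/
def sSign {k : ℕ} (x y : Fin k) : ℝ :=
  if x.val % 2 = 1 ∧ k ≤ x.val + y.val then -1 else 1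

/-- Tail index w_{x,y}: y if x even, (x+y) mod k if x odd. -/
def wIdx {k : ℕ} (x y : Fin k) : Fin k :=
  if x.val % 2 = 0 then y else ⟨(x.val + y.val) % k, Nat.mod_lt _ x.pos⟩

/-- SEEK scoring function f₄. -/
def f4 {k m : ℕ} (h r t : Fin k → Fin m → ℝ) : ℝ :=
  ∑ x : Fin k, ∑ y : Fin k, sSign x y * mdot (r x) (h y) (t (wIdx x y))

/-- All-segments scoring function f₂. -/
def f2 {k m : ℕ} (h r t : Fin k → Fin m → ℝ) : ℝ :=
  ∑ x : Fin k, ∑ y : Fin k, ∑ w : Fin k, mdot (r x) (h y) (t w)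

/-- Signed scoring function f₃. -/
def f3 {k m : ℕ} (h r t : Fin k → Fin m → ℝ) : ℝ :=
  ∑ x : Fin k, ∑ y : Fin k, ∑ w : Fin k, sSign x y * mdot (r x) (h y) (t w)

/- Put all of `r` on segment 1, all of `h` on segment `k - 1` and all of `t` on segment 0. Then
`f₄(h, r, t)` reduces to the single term `x = 1, y = k - 1`, which wraps around (`w = 0`) and
carries the sign `-1`, so it equals `-m`; in `f₄(t, r, h)` the only term is `x = 1, y = 0`, which
carries the sign `+1` and a product of nonnegative vectors, so it is `≥ 0`. -/

lemma mdot_one (m : ℕ) : mdot (1 : Fin m → ℝ) 1 1 = m := by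
  simp [mdot]

lemma mdot_nonneg {m : ℕ} {a b c : Fin m → ℝ} (ha : 0 ≤ a) (hb : 0 ≤ b) (hc : 0 ≤ c) :
    0 ≤ mdot a b c :=
  Finset.sum_nonneg fun i _ => mul_nonneg (mul_nonneg (ha i) (hb i)) (hc i)

lemma mdot_zero_left {m : ℕ} (b c : Fin m → ℝ) : mdot 0 b c = 0 := by
  simp [mdot]

lemma mdot_zero_middle {m : ℕ} (a c : Fin m → ℝ) : mdot a 0 c = 0 := by
  simp [mdot]

lemma sSign_of_odd_of_le {k : ℕ} {x y : Fin k} (hx : x.val % 2 = 1) (hxy : k ≤ x.val + y.val) :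
    sSign x y = -1 :=
  if_pos ⟨hx, hxy⟩

lemma sSign_of_lt {k : ℕ} {x y : Fin k} (hxy : x.val + y.val < k) : sSign x y = 1 :=
  if_neg fun h => (hxy.trans_le h.2).false

lemma wIdx_one_last (n : ℕ) : wIdx (1 : Fin (n + 2)) (Fin.last (n + 1)) = 0 := by
  ext
  simp [wIdx, add_comm 1 (n + 1)]

lemma f4_single_single {k m : ℕ} (x₀ y₀ : Fin k) (a b : Fin m → ℝ) (t : Fin k → Fin m → ℝ) :
    f4 (Pi.single y₀ a) (Pi.single x₀ b) t = sSign x₀ y₀ * mdot b a (t (wIdx x₀ y₀)) := by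
  rw [f4, Fintype.sum_eq_single x₀, Fintype.sum_eq_single y₀]
  · simp
  · intro y hy
    rw [Pi.single_eq_of_ne hy, mdot_zero_middle, mul_zero]
  · intro x hx
    simp [Pi.single_eq_of_ne hx, mdot_zero_left]

/-- For every k ≥ 2, f₄ can distinguish a triple from its reverse. -/
theorem f4_supports_antisymmetry (k m : ℕ) (hk : 2 ≤ k) (hm : 1 ≤ m) :
    ∃ h r t : Fin k → Fin m → ℝ, f4 h r t ≠ f4 t r h := by
  obtain ⟨n, rfl⟩ : ∃ n, k = n + 2 := ⟨k - 2, by omega⟩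
  let h : Fin (n + 2) → Fin m → ℝ := Pi.single (Fin.last (n + 1)) 1
  let r : Fin (n + 2) → Fin m → ℝ := Pi.single 1 1
  let t : Fin (n + 2) → Fin m → ℝ := Pi.single 0 1
  have forward : f4 h r t = -m := by
    have wraps : n + 2 ≤ (1 : Fin (n + 2)).val + (Fin.last (n + 1)).val := by
      simp only [Fin.coe_ofNat_eq_mod, Nat.one_mod, Fin.val_last]; omega
    rw [f4_single_single, sSign_of_odd_of_le (by simp) wraps, wIdx_one_last]
    simp [t, mdot_one]
  have reverse_nonneg : 0 ≤ f4 t r h := by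
    rw [f4_single_single, sSign_of_lt (by simp), one_mul]
    have h_nonneg : 0 ≤ h := Pi.single_nonneg.2 zero_le_one
    exact mdot_nonneg zero_le_one zero_le_one (h_nonneg _)
  refine ⟨h, r, t, ne_of_lt ?_⟩
  calc f4 h r t = -m := forward
    _ < 0 := neg_neg_of_pos (Nat.cast_pos.2 hm)
    _ ≤ f4 t r h := reverse_nonneg
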